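/- arXiv:1412.7666 — 3 statements merged into one kernel-verified Lean document; each statement's English description precedes it below -/
import Mathlib

section
/- In the ring (R_n, ∗), the identity s̄_λ(x) = 𝔥_P(x) ∗ s̄_{(n)}(x) holds for every standard Young tableau P of shape λ, where s̄_λ is the generating function of reverse plane partitions of shape λ, 𝔥_P is the pedestal polynomial of P, and s̄_{(n)} is the generating function of weakly increasing n-tuples. -/
/-- The type of nodes (cells) of a Young diagram. -/
abbrev Cell (μ : YoungDiagram) : Type := {c : ℕ × ℕ // c ∈ μ.cells}

/-- `T` is a standard Young tableau of shape `μ` (with `n = |μ|` nodes):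
a bijection from the nodes to `Fin n` increasing in both coordinates,
i.e. compatible with the natural partial (product) order on nodes. -/
def IsSYT (μ : YoungDiagram) (n : ℕ) (T : Cell μ ≃ Fin n) : Prop :=
  ∀ a b : Cell μ, a.1 ≤ b.1 → T a ≤ T b

/-- A reverse plane partition of shape `μ`: a filling by non-negative
integers weakly increasing along rows and columns. -/
def IsRPP (μ : YoungDiagram) (f : Cell μ → ℕ) : Prop :=
  ∀ a b : Cell μ, a.1 ≤ b.1 → f a ≤ f b

/-- `l` (0-indexed) is a `(P,Q)`-disagreement position: the `(l+1)`-st node in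
`Q`-order precedes the `l`-th node in `P`-order. -/
def disag {S : Type} {n : ℕ} (P Q : S ≃ Fin n) (l : ℕ) : Prop :=
  ∃ h : l + 1 < n, P (Q.symm ⟨l + 1, h⟩) < P (Q.symm ⟨l, Nat.lt_of_succ_lt h⟩)

open Classical in
/-- The `P`-pedestal of `Q`: `q_{P,Q}(α_k)` is the number of
`(P,Q)`-disagreement positions `l < k`, where `α_k` is the `k`-th node in
`Q`-order. -/
noncomputable def ped {S : Type} {n : ℕ} (P Q : S ≃ Fin n) (s : S) : ℕ :=
  ((Finset.range (Q s : ℕ)).filter fun l => disag P Q l).card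

/-- The weakly increasing tuple of the `n` values of a filling `f` of `μ`
(the exponent tuple of the monomial `Π_{α} x_{f(α)}` under
`φ_n : x_{i_1,…,i_n} ↦ y_1^{i_1}⋯y_n^{i_n}`). -/
noncomputable def tup (μ : YoungDiagram) (n : ℕ) (f : Cell μ → ℕ) : Fin n → ℕ :=
  fun i => (Multiset.sort (μ.cells.attach.val.map f) (· ≤ ·)).getD i 0

/-- The image under `φ_n` of the "wrong" Schur function
`s̄_λ = Σ_{𝔔 RPP of shape λ} Π_{α∈λ} x_{𝔔(α)}`: the coefficient of `y^d` is
the number of reverse plane partitions of shape `λ` whose sorted value tuple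
is `d`. -/
noncomputable def sbar (μ : YoungDiagram) (n : ℕ) : MvPowerSeries (Fin n) ℂ :=
  fun d => ((Set.ncard {f : Cell μ → ℕ | IsRPP μ f ∧ ∀ i : Fin n, tup μ n f i = d i} : ℕ) : ℂ)

/-- The image under `φ_n` of the pedestal polynomial
`𝔥_P = Σ_{Q ∈ st_λ} Π_{α∈λ} x_{q_{P,Q}(α)}`. -/
noncomputable def hpSeries (μ : YoungDiagram) (n : ℕ) (P : Cell μ ≃ Fin n) :
    MvPowerSeries (Fin n) ℂ :=
  fun d => ((Set.ncard {Q : Cell μ ≃ Fin n |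
    IsSYT μ n Q ∧ ∀ i : Fin n, tup μ n (ped P Q) i = d i} : ℕ) : ℂ)

/-- The image under `φ_n` of `s̄_{(n)} = Σ_{i_1 ≤ ⋯ ≤ i_n} x_{i_1,…,i_n}`. -/
noncomputable def sOne (n : ℕ) : MvPowerSeries (Fin n) ℂ :=
  fun d => if Monotone (fun i : Fin n => d i) then (1 : ℂ) else 0

/-! A reverse plane partition `f` with sorted value tuple `d` is recovered as `d ∘ Q` from its
standardization `Q` (cells listed by value, ties broken by `P`), and `Q` is a standard tableau
because `P` is. Conversely `Q` is the standardization of `d ∘ Q` exactly when `d` increases weakly,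
and strictly across every `(P, Q)`-disagreement; since the pedestal tuple `q` of `Q` counts the
disagreements so far, this says that `d - q` is a weakly increasing tuple, i.e. that `y^d` occurs in
`y^q * s̄_(n)`. -/

section Standardization

variable {S α : Type*} [LinearOrder α] {n : ℕ}

/-- `standardize P f` numbers the elements of `S` in increasing order of `f`, breaking ties
by `P`. -/
noncomputable def standardize (P : S ≃ Fin n) (f : S → α) : S ≃ Fin n :=
  P.trans (Tuple.sort (f ∘ P.symm)).symm

theorem standardize_eq_iff {P Q : S ≃ Fin n} {f : S → α} :
    standardize P f = Q ↔ StrictMono fun i => toLex (f (Q.symm i), P (Q.symm i)) := by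
  have h : standardize P f = Q ↔ Q.symm.trans P = Tuple.sort (f ∘ P.symm) := by
    constructor
    · rintro rfl; ext; simp [standardize]
    · intro h; rw [standardize, ← h]; ext; simp
  rw [h, Tuple.eq_sort_iff']
  simp only [StrictMono, ← Subtype.coe_lt_coe]
  simp only [Tuple.graphEquiv₁, Function.comp_apply, Equiv.trans_apply, Equiv.coe_fn_mk,
    Equiv.symm_apply_apply]
  rfl

variable (P : S ≃ Fin n) (f : S → α)

theorem strictMono_standardize_symm :
    StrictMono fun i => toLex (f ((standardize P f).symm i), P ((standardize P f).symm i)) :=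
  standardize_eq_iff.1 rfl

theorem monotone_comp_standardize_symm : Monotone (f ∘ (standardize P f).symm) :=
  Prod.Lex.monotone_fst_ofLex.comp (strictMono_standardize_symm P f).monotone

theorem standardize_le_standardize_iff {a b : S} :
    standardize P f a ≤ standardize P f b ↔ toLex (f a, P a) ≤ toLex (f b, P b) := by
  simpa using ((strictMono_standardize_symm P f).le_iff_le (a := standardize P f a)
    (b := standardize P f b)).symm

end Standardization

section SortedTuple

variable {μ : YoungDiagram} {n : ℕ}

theorem tup_comp_equiv (Q : Cell μ ≃ Fin n) {g : Fin n → ℕ} (hg : Monotone g) :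
    tup μ n (g ∘ Q) = g := by
  have hm : μ.cells.attach.val.map (g ∘ Q) = (List.ofFn g : List ℕ) := by
    rw [← Finset.univ_eq_attach, ← Multiset.map_map, Multiset.map_univ_val_equiv,
      Fin.univ_val_map]
  have hs : Multiset.sort ((List.ofFn g : List ℕ) : Multiset ℕ) (· ≤ ·) = List.ofFn g :=
    List.Perm.eq_of_pairwise' (Multiset.pairwise_sort _ _) (List.sortedLE_ofFn_iff.2 hg).pairwise
      (Multiset.coe_eq_coe.mp (Multiset.sort_eq _ _))
  ext i
  rw [tup, hm, hs, List.getD_eq_getElem _ _ (by simp), List.getElem_ofFn]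

theorem tup_eq_comp_standardize_symm (P : Cell μ ≃ Fin n) (f : Cell μ → ℕ) :
    tup μ n f = f ∘ (standardize P f).symm := by
  conv_lhs => rw [show f = (f ∘ (standardize P f).symm) ∘ standardize P f by ext; simp]
  exact tup_comp_equiv _ (monotone_comp_standardize_symm P f)

end SortedTuple

section Disagreements

theorem le_and_monotone_sub_iff {m : ℕ} {d e : Fin (m + 1) → ℕ} {δ : Fin m → ℕ}
    (he₀ : e 0 = 0) (he : ∀ i, e i.succ = e i.castSucc + δ i) :
    ((∀ i, e i ≤ d i) ∧ Monotone fun i => d i - e i) ↔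
      ∀ i : Fin m, d i.castSucc + δ i ≤ d i.succ := by
  rw [Fin.monotone_iff_le_succ]
  constructor
  · rintro ⟨hle, hmono⟩ i
    have := hmono i
    have := hle i.castSucc
    have := hle i.succ
    have := he i
    omega
  · intro h
    have hle : ∀ i, e i ≤ d i := by
      intro i
      induction i using Fin.induction with
      | zero => omega
      | succ i ih => have := h i; have := he i; omega
    refine ⟨hle, fun i => ?_⟩
    have := h i
    have := he i
    have := hle i.castSucc
    omega

theorem strictMono_toLex_iff {m : ℕ} {β : Type*} [LinearOrder β] {d : Fin (m + 1) → ℕ}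
    {σ : Fin (m + 1) → β} (hσ : Function.Injective σ) :
    (StrictMono fun i => toLex (d i, σ i)) ↔
      ∀ i : Fin m, d i.castSucc + (if σ i.succ < σ i.castSucc then 1 else 0) ≤ d i.succ := by
  rw [Fin.strictMono_iff_lt_succ]
  refine forall_congr' fun i => ?_
  have hne : σ i.castSucc ≠ σ i.succ := hσ.ne Fin.castSucc_lt_succ.ne
  rw [Prod.Lex.toLex_lt_toLex]
  dsimp only
  split_ifs with h
  · simp only [h.not_gt, and_false, or_false]
    omega
  · simp only [lt_of_le_of_ne (not_lt.1 h) hne, and_true]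
    omega

theorem disag_iff {S : Type} {m : ℕ} (P Q : S ≃ Fin (m + 1)) (i : Fin m) :
    disag P Q i ↔ P (Q.symm i.succ) < P (Q.symm i.castSucc) := by
  simp [disag, Fin.succ, Fin.castSucc, Fin.castAdd, Fin.castLE]

variable {S : Type} {n : ℕ} (P Q : S ≃ Fin n)

open Classical in
noncomputable def disagCount (k : ℕ) : ℕ :=
  ((Finset.range k).filter fun l => disag P Q l).card

open Classical in
theorem monotone_disagCount : Monotone (disagCount P Q) := fun _ _ h =>
  Finset.card_le_card (Finset.filter_subset_filter _ (Finset.range_subset_range.2 h))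

open Classical in
theorem disagCount_succ (k : ℕ) :
    disagCount P Q (k + 1) = disagCount P Q k + if disag P Q k then 1 else 0 := by
  simp only [disagCount, Finset.card_filter, Finset.sum_range_succ]

theorem disagCount_le_and_monotone_sub_iff {d : Fin n → ℕ} :
    ((∀ i : Fin n, disagCount P Q i ≤ d i) ∧ Monotone fun i : Fin n => d i - disagCount P Q i)
      ↔ StrictMono fun i => toLex (d i, P (Q.symm i)) := by
  classical
  cases n with
  | zero => simp [Monotone, StrictMono]
  | succ m =>
    rw [le_and_monotone_sub_iff (by simp [disagCount]) fun i => disagCount_succ P Q i,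
      strictMono_toLex_iff (σ := fun i => P (Q.symm i)) (P.injective.comp Q.symm.injective)]
    simp only [disag_iff]

end Disagreements

section Pedestal

variable {μ : YoungDiagram} {n : ℕ}

theorem standardize_comp_eq {S : Type*} {P Q : S ≃ Fin n} {d : Fin n → ℕ}
    (hd : StrictMono fun i => toLex (d i, P (Q.symm i))) : standardize P (d ∘ Q) = Q :=
  standardize_eq_iff.2 (by simpa using hd)

theorem isSYT_standardize {P : Cell μ ≃ Fin n} (hP : IsSYT μ n P) {f : Cell μ → ℕ}
    (hf : IsRPP μ f) : IsSYT μ n (standardize P f) := fun a b hab =>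
  (standardize_le_standardize_iff P f).2 (Prod.Lex.toLex_mono ⟨hf a b hab, hP a b hab⟩)

theorem ncard_rpp_eq_ncard_syt {P : Cell μ ≃ Fin n} (hP : IsSYT μ n P) (d : Fin n → ℕ) :
    {f | IsRPP μ f ∧ ∀ i, tup μ n f i = d i}.ncard =
      {Q | IsSYT μ n Q ∧ StrictMono fun i => toLex (d i, P (Q.symm i))}.ncard := by
  symm
  refine Set.ncard_congr (fun Q _ => d ∘ Q) ?_ ?_ ?_
  · rintro Q ⟨hQ, hd⟩
    have hmono : Monotone d := Prod.Lex.monotone_fst_ofLex.comp hd.monotone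
    exact ⟨fun a b hab => hmono (hQ a b hab), fun i => by rw [tup_comp_equiv Q hmono]⟩
  · rintro Q Q' ⟨-, hQ⟩ ⟨-, hQ'⟩ h
    rw [← standardize_comp_eq hQ, h, standardize_comp_eq hQ']
  · rintro f ⟨hf, hd⟩
    have hd : d = f ∘ (standardize P f).symm := by
      rw [← tup_eq_comp_standardize_symm]
      exact (funext hd).symm
    subst hd
    exact ⟨standardize P f, ⟨isSYT_standardize hP hf, strictMono_standardize_symm P f⟩,
      by ext; simp⟩

noncomputable def pedTuple {S : Type} (P Q : S ≃ Fin n) : Fin n →₀ ℕ :=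
  Finsupp.equivFunOnFinite.symm fun i => disagCount P Q i

theorem tup_ped (P Q : Cell μ ≃ Fin n) : tup μ n (ped P Q) = pedTuple P Q :=
  tup_comp_equiv Q ((monotone_disagCount P Q).comp Fin.val_strictMono.monotone)

open Classical MvPowerSeries in
theorem hpSeries_eq_sum (P : Cell μ ≃ Fin n) :
    hpSeries μ n P = ∑ Q with IsSYT μ n Q, monomial (pedTuple P Q) 1 := by
  ext d
  rw [map_sum]
  simp only [coeff_monomial, Finset.sum_boole]
  show ((Set.ncard _ : ℕ) : ℂ) = _
  rw [← Set.ncard_coe_finset]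
  congr 2
  ext Q
  simp [tup_ped, Finsupp.ext_iff, eq_comm]

open MvPowerSeries in
theorem coeff_hpSeries_mul_sOne (P : Cell μ ≃ Fin n) (d : Fin n →₀ ℕ) :
    coeff d (hpSeries μ n P * sOne n) =
      {Q | IsSYT μ n Q ∧ StrictMono fun i => toLex (d i, P (Q.symm i))}.ncard := by
  classical
  rw [hpSeries_eq_sum, Finset.sum_mul, map_sum]
  simp only [coeff_monomial_mul, one_mul]
  have hterm (Q : Cell μ ≃ Fin n) :
      (if pedTuple P Q ≤ d then coeff (d - pedTuple P Q) (sOne n) else 0) =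
        if StrictMono fun i => toLex (d i, P (Q.symm i)) then 1 else 0 := by
    simp only [← disagCount_le_and_monotone_sub_iff, ite_and, coeff_apply, sOne,
      Finsupp.le_def, Finsupp.coe_tsub, Pi.sub_apply, pedTuple,
      Finsupp.coe_equivFunOnFinite_symm]
    congr
  rw [Finset.sum_congr rfl fun Q _ => hterm Q, Finset.sum_boole, Finset.filter_filter,
    ← Set.ncard_coe_finset]
  simp

end Pedestal

theorem stmt7_general (μ : YoungDiagram) (n : ℕ)
    (P : Cell μ ≃ Fin n) (hP : IsSYT μ n P) :
    sbar μ n = hpSeries μ n P * sOne n := by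
  ext d
  rw [coeff_hpSeries_mul_sOne, MvPowerSeries.coeff_apply, sbar, ncard_rpp_eq_ncard_syt hP]

/-- in `(R_n, ∗)` (realized inside `ℂ[[y_1,…,y_n]]` via the
injective ring homomorphism `φ_n`), `s̄_λ = 𝔥_P ∗ s̄_{(n)}` for every standard
Young tableau `P` of shape `λ`. -/
theorem stmt7 (μ : YoungDiagram) (n : ℕ) (hn : μ.card = n)
    (P : Cell μ ≃ Fin n) (hP : IsSYT μ n P) :
    sbar μ n = hpSeries μ n P * sOne n :=
  stmt7_general μ n P hP
end

section
/- For every Young diagram λ with n nodes and any standard tableau P of shape λ, the generating function identity Σ_{k≥0} r_λ(k) x^k = π_λ(x) / ((1−x)(1−x²)⋯(1−xⁿ)) holds as formal power series, where r_λ(k) is the number of reverse plane partitions of shape λ with volume k and π_λ(x) = Σ_{Q ∈ st_λ} x^{|q_{P,Q}|}. -/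
/-- Volume of a filling of `μ`. -/
noncomputable def vol (μ : YoungDiagram) (f : Cell μ → ℕ) : ℕ :=
  ∑ c ∈ μ.cells.attach, f c

open Classical in
/-- `π_λ(x) = Σ_{Q ∈ st_λ} x^{|q_{P,Q}|}`. -/
noncomputable def piP (μ : YoungDiagram) (n : ℕ) (P : Cell μ ≃ Fin n) : Polynomial ℤ :=
  ∑ Q ∈ Finset.univ.filter (fun Q : Cell μ ≃ Fin n => IsSYT μ n Q),
    Polynomial.X ^ vol μ (ped P Q)

/-!
Sort the cells of a reverse plane partition `f` by value, breaking ties by `P`. This is a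
standard tableau `Q`, and `f - q_{P,Q}` read along `Q` is weakly increasing, i.e. a partition
`g` with at most `n` parts. Conversely `g ∘ Q + q_{P,Q}` sorts back to `Q`, because along `Q`
the pair `(q_{P,Q}, P)` increases lexicographically. Volume adds, so the generating function of
reverse plane partitions is `π_λ(x)` times that of partitions with at most `n` parts, which is
`1 / ((1 - x) ⋯ (1 - xⁿ))`.
-/

open Finset

section SortEquiv

variable {C α : Type*} [Fintype C] [LinearOrder α] {n : ℕ}

noncomputable def sortEquiv (key : C → α) (hkey : Function.Injective key)
    (hC : Fintype.card C = n) : C ≃ Fin n :=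
  letI := LinearOrder.lift' key hkey
  (Fintype.orderIsoFinOfCardEq C hC).symm.toEquiv

variable (key : C → α) (hkey : Function.Injective key) (hC : Fintype.card C = n)

theorem strictMono_comp_sortEquiv_symm : StrictMono (key ∘ (sortEquiv key hkey hC).symm) :=
  letI := LinearOrder.lift' key hkey
  (Fintype.orderIsoFinOfCardEq C hC).strictMono

theorem sortEquiv_le_sortEquiv_iff {c d : C} :
    sortEquiv key hkey hC c ≤ sortEquiv key hkey hC d ↔ key c ≤ key d := by
  simpa using ((strictMono_comp_sortEquiv_symm key hkey hC).le_iff_le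
    (a := sortEquiv key hkey hC c) (b := sortEquiv key hkey hC d)).symm

theorem eq_sortEquiv_of_strictMono {Q : C ≃ Fin n} (hQ : StrictMono (key ∘ Q.symm)) :
    Q = sortEquiv key hkey hC := by
  have hrange := (hQ.range_inj (strictMono_comp_sortEquiv_symm key hkey hC)).1
    (by rw [EquivLike.range_comp, EquivLike.range_comp])
  exact Equiv.symm_bijective.injective (Equiv.ext fun i => hkey (congrFun hrange i))

end SortEquiv

theorem Prod.Lex.toLex_add_lt_toLex_add {α β : Type*} [AddCommMonoid α] [PartialOrder α]
    [IsOrderedCancelAddMonoid α] [LT β] {a b a' b' : α} {x y : β}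
    (h : toLex (a, x) < toLex (b, y)) (h' : a' ≤ b') :
    toLex (a' + a, x) < toLex (b' + b, y) := by
  rw [Prod.Lex.toLex_lt_toLex] at h ⊢
  rcases h with hab | ⟨rfl, hxy⟩
  · exact Or.inl (add_lt_add_of_le_of_lt h' hab)
  · rcases h'.lt_or_eq with h' | rfl
    · exact Or.inl (add_lt_add_of_lt_of_le h' le_rfl)
    · exact Or.inr ⟨rfl, hxy⟩

section Pedestal

open Classical

variable {S : Type} {n : ℕ} (P Q : S ≃ Fin n)

theorem ped_le_ped {s t : S} (h : Q s ≤ Q t) : ped P Q s ≤ ped P Q t :=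
  card_le_card (filter_subset_filter _ (range_subset_range.2 h))

theorem ped_eq_zero_of_val_eq_zero {s : S} (h : (Q s : ℕ) = 0) : ped P Q s = 0 := by
  simp [ped, h]

theorem Fin.val_eq_add_one_of_covBy {i j : Fin n} (h : i ⋖ j) : (j : ℕ) = i + 1 :=
  (Nat.covBy_iff_add_one_eq.1 (Fin.covBy_iff.1 h)).symm

theorem disag_iff_of_covBy {i j : Fin n} (h : i ⋖ j) :
    disag P Q i ↔ P (Q.symm j) < P (Q.symm i) := by
  have hj := Fin.val_eq_add_one_of_covBy h
  simp only [disag, ← hj, Fin.eta]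
  exact ⟨fun ⟨_, h⟩ => h, fun h' => ⟨j.isLt, h'⟩⟩

theorem ped_symm_of_covBy {i j : Fin n} (h : i ⋖ j) :
    ped P Q (Q.symm j) = ped P Q (Q.symm i) + if disag P Q i then 1 else 0 := by
  simp only [ped, Equiv.apply_symm_apply, Fin.val_eq_add_one_of_covBy h, range_add_one,
    filter_insert]
  split_ifs
  · exact card_insert_of_notMem (by simp)
  · rfl

/-- Along `Q` the pedestal goes up exactly at the disagreements, and between two of them `P`
goes up. -/
theorem strictMono_toLex_ped_symm :
    StrictMono fun i => toLex (ped P Q (Q.symm i), P (Q.symm i)) := by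
  refine (strictMono_iff_forall_covBy _).2 fun i j hij => ?_
  rw [Prod.Lex.toLex_lt_toLex, ped_symm_of_covBy P Q hij]
  by_cases hd : disag P Q i
  · simp [hd]
  · have hne : P (Q.symm i) ≠ P (Q.symm j) := by simpa using hij.lt.ne
    have hle := not_lt.1 ((disag_iff_of_covBy P Q hij).not.1 hd)
    simpa [hd] using lt_of_le_of_ne hle hne

end Pedestal

section ValueOrder

open Classical

variable {S : Type} {n : ℕ} (P : S ≃ Fin n) (f : S → ℕ)

theorem injective_toLex_apply_prod :
    Function.Injective fun s => toLex (f s, P s) :=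
  fun _ _ h => P.injective (congrArg Prod.snd (toLex.injective h))

variable [Fintype S]

noncomputable def valueOrder : S ≃ Fin n :=
  sortEquiv (fun s => toLex (f s, P s)) (injective_toLex_apply_prod P f)
    ((Fintype.card_congr P).trans (Fintype.card_fin n))

theorem strictMono_toLex_valueOrder_symm :
    StrictMono fun i => toLex (f ((valueOrder P f).symm i), P ((valueOrder P f).symm i)) :=
  strictMono_comp_sortEquiv_symm (fun s => toLex (f s, P s)) _ _

theorem add_ite_disag_le_of_covBy {i j : Fin n} (h : i ⋖ j) :
    f ((valueOrder P f).symm i) + (if disag P (valueOrder P f) i then 1 else 0) ≤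
      f ((valueOrder P f).symm j) := by
  have hlt := strictMono_toLex_valueOrder_symm P f h.lt
  rw [Prod.Lex.toLex_lt_toLex] at hlt
  split_ifs with hd
  · rw [disag_iff_of_covBy P _ h] at hd
    rcases hlt with hlt | ⟨_, hP⟩
    · exact hlt
    · exact absurd hP (lt_asymm hd)
  · rcases hlt with hlt | ⟨heq, _⟩ <;> omega

theorem monotone_sub_ped_valueOrder :
    Monotone fun i => (f ((valueOrder P f).symm i) : ℤ) -
      ped P (valueOrder P f) ((valueOrder P f).symm i) := by
  refine (monotone_iff_forall_covBy _).2 fun i j hij => ?_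
  have hstep := add_ite_disag_le_of_covBy P f hij
  rw [ped_symm_of_covBy P _ hij]
  split_ifs at hstep ⊢ <;> push_cast <;> omega

theorem ped_valueOrder_le (s : S) : ped P (valueOrder P f) s ≤ f s := by
  let i₀ : Fin n := ⟨0, Nat.zero_lt_of_lt (valueOrder P f s).isLt⟩
  have hmono := monotone_sub_ped_valueOrder P f (show i₀ ≤ valueOrder P f s from Nat.zero_le _)
  have hped₀ : ped P (valueOrder P f) ((valueOrder P f).symm i₀) = 0 :=
    ped_eq_zero_of_val_eq_zero P _ (by simp [i₀])
  simp only [hped₀, Equiv.symm_apply_apply] at hmono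
  omega

end ValueOrder

section PedestalDecomposition

variable {S : Type} [Fintype S] {n : ℕ} (P : S ≃ Fin n)

noncomputable def partitionPart (f : S → ℕ) (i : Fin n) : ℕ :=
  f ((valueOrder P f).symm i) - ped P (valueOrder P f) ((valueOrder P f).symm i)

theorem monotone_partitionPart (f : S → ℕ) : Monotone (partitionPart P f) := by
  intro i j hij
  have h : _ ≤ _ := monotone_sub_ped_valueOrder P f hij
  have hi := ped_valueOrder_le P f ((valueOrder P f).symm i)
  have hj := ped_valueOrder_le P f ((valueOrder P f).symm j)
  simp only [partitionPart] at h ⊢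
  omega

noncomputable def pedFilling (Q : S ≃ Fin n) (g : Fin n → ℕ) (s : S) : ℕ :=
  g (Q s) + ped P Q s

theorem pedFilling_partitionPart (f : S → ℕ) :
    pedFilling P (valueOrder P f) (partitionPart P f) = f := by
  funext s
  have := ped_valueOrder_le P f s
  simp only [pedFilling, partitionPart, Equiv.symm_apply_apply]
  omega

variable {P} {g : Fin n → ℕ}

theorem valueOrder_pedFilling (Q : S ≃ Fin n) (hg : Monotone g) :
    valueOrder P (pedFilling P Q g) = Q := by
  refine (eq_sortEquiv_of_strictMono _ _ _ fun i j hij => ?_).symm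
  simpa [pedFilling] using
    Prod.Lex.toLex_add_lt_toLex_add (strictMono_toLex_ped_symm P Q hij) (hg hij.le)

theorem partitionPart_pedFilling (Q : S ≃ Fin n) (hg : Monotone g) :
    partitionPart P (pedFilling P Q g) = g := by
  funext i
  simp [partitionPart, valueOrder_pedFilling Q hg, pedFilling]

theorem sum_pedFilling (Q : S ≃ Fin n) :
    ∑ s, pedFilling P Q g s = ∑ i, g i + ∑ s, ped P Q s := by
  rw [← Q.sum_comp g]
  exact Finset.sum_add_distrib

end PedestalDecomposition

section MonotoneSeries

open PowerSeries

/-- The generating function of partitions with at most `n` parts, i.e. of weakly increasing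
`g : Fin n → ℕ`, by size. -/
noncomputable def monotoneSeries (n : ℕ) : PowerSeries ℤ :=
  PowerSeries.mk fun m => Nat.card {g : Fin n → ℕ // Monotone g ∧ ∑ i, g i = m}

instance finite_monotone_sum_add_eq (n a m : ℕ) :
    Finite {g : Fin n → ℕ // Monotone g ∧ ∑ i, g i + a = m} :=
  Set.Finite.to_subtype <| (Set.finite_Iic fun _ => m).subset fun g hg i =>
    (single_le_sum (fun j _ => Nat.zero_le (g j)) (mem_univ i)).trans (Nat.le.intro hg.2)

instance finite_monotone_sum_eq (n m : ℕ) :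
    Finite {g : Fin n → ℕ // Monotone g ∧ ∑ i, g i = m} :=
  Finite.of_equiv _ (Equiv.subtypeEquivRight fun g => and_congr_right fun _ => by rw [add_zero] :
    {g : Fin n → ℕ // Monotone g ∧ ∑ i, g i + 0 = m} ≃ _)

theorem coeff_X_pow_mul_monotoneSeries (n a m : ℕ) :
    coeff m ((X : PowerSeries ℤ) ^ a * monotoneSeries n) =
      Nat.card {g : Fin n → ℕ // Monotone g ∧ ∑ i, g i + a = m} := by
  rw [coeff_X_pow_mul', monotoneSeries]
  split_ifs with h
  · rw [coeff_mk]
    exact congrArg _ (Nat.card_congr (Equiv.subtypeEquivRight fun g =>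
      and_congr_right fun _ => by omega))
  · rw [eq_comm, Nat.cast_eq_zero, Nat.card_eq_zero]
    exact Or.inl ⟨fun g => h (by omega)⟩

theorem monotoneSeries_zero : monotoneSeries 0 = 1 := by
  ext m
  rcases m with _ | m
  · simp [monotoneSeries, Subsingleton.monotone]
  · simp [monotoneSeries, eq_comm]

theorem one_le_of_monotone {n : ℕ} {g : Fin (n + 1) → ℕ} (hg : Monotone g) (h₀ : g 0 ≠ 0)
    (i : Fin (n + 1)) : 1 ≤ g i :=
  (Nat.one_le_iff_ne_zero.2 h₀).trans (hg (Fin.zero_le i))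

/-- Split according to whether the smallest part is zero: if not, subtract one from each part. -/
def monotoneSumEquiv (n m : ℕ) :
    {g : Fin (n + 1) → ℕ // Monotone g ∧ ∑ i, g i = m} ≃
      {g : Fin n → ℕ // Monotone g ∧ ∑ i, g i = m} ⊕
        {g : Fin (n + 1) → ℕ // Monotone g ∧ ∑ i, g i + (n + 1) = m} where
  toFun g :=
    if h₀ : g.1 0 = 0 then
      .inl ⟨Fin.tail g.1, g.2.1.comp (Fin.strictMono_succ.monotone), by
        have := g.2.2
        rw [Fin.sum_univ_succ, h₀, zero_add] at this
        exact this⟩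
    else
      .inr ⟨g.1 - 1, fun i j hij => Nat.sub_le_sub_right (g.2.1 hij) 1, by
        have : ∑ i, (g.1 i - 1) + ∑ _i : Fin (n + 1), 1 = ∑ i, g.1 i := by
          rw [← sum_add_distrib]
          exact sum_congr rfl fun i _ => Nat.sub_add_cancel (one_le_of_monotone g.2.1 h₀ i)
        simpa [g.2.2] using this⟩
  invFun := Sum.elim
    (fun g => ⟨Fin.cons 0 g.1, monotone_iff_forall_lt.2 <|
      (Fin.liftFun_cons (· ≤ ·)).2 ⟨fun i => Nat.zero_le _, fun _ _ h => g.2.1 h.le⟩,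
      by simp [Fin.sum_cons, g.2.2]⟩)
    (fun g => ⟨g.1 + 1, fun i j hij => Nat.add_le_add_right (g.2.1 hij) 1, by
      simp [Finset.sum_add_distrib, ← g.2.2]⟩)
  left_inv g := by
    by_cases h₀ : g.1 0 = 0
    · simp only [h₀, dite_true, Sum.elim_inl]
      exact Subtype.ext (show Fin.cons 0 (Fin.tail g.1) = g.1 by rw [← h₀, Fin.cons_self_tail])
    · simp only [h₀, dite_false, Sum.elim_inr]
      exact Subtype.ext (funext fun i => Nat.sub_add_cancel (one_le_of_monotone g.2.1 h₀ i))
  right_inv x := by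
    rcases x with g | g <;> simp

theorem monotoneSeries_succ (n : ℕ) :
    monotoneSeries (n + 1) = monotoneSeries n + X ^ (n + 1) * monotoneSeries (n + 1) := by
  ext m
  rw [map_add, coeff_X_pow_mul_monotoneSeries, monotoneSeries, monotoneSeries, coeff_mk, coeff_mk,
    Nat.card_congr (monotoneSumEquiv n m), Nat.card_sum, Nat.cast_add]

theorem monotoneSeries_mul_prod (n : ℕ) :
    monotoneSeries n * ∏ k ∈ range n, (1 - X ^ (k + 1)) = 1 := by
  induction n with
  | zero => simp [monotoneSeries_zero]
  | succ n ih =>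
    rw [prod_range_succ]
    linear_combination (∏ k ∈ range n, (1 - X ^ (k + 1))) * (monotoneSeries_succ n) + ih

end MonotoneSeries

section ReversePlanePartition

variable {μ : YoungDiagram} {n : ℕ} {P : Cell μ ≃ Fin n}

theorem isSYT_valueOrder (hP : IsSYT μ n P) {f : Cell μ → ℕ} (hf : IsRPP μ f) :
    IsSYT μ n (valueOrder P f) := fun a b hab =>
  (sortEquiv_le_sortEquiv_iff _ _ _).2 (Prod.Lex.toLex_mono ⟨hf a b hab, hP a b hab⟩)

theorem isRPP_pedFilling {Q : Cell μ ≃ Fin n} (hQ : IsSYT μ n Q) {g : Fin n → ℕ}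
    (hg : Monotone g) : IsRPP μ (pedFilling P Q g) := fun a b hab =>
  add_le_add (hg (hQ a b hab)) (ped_le_ped P Q (hQ a b hab))

theorem vol_eq_sum (f : Cell μ → ℕ) : vol μ f = ∑ c, f c := by
  rw [vol, attach_eq_univ]

noncomputable def rppEquiv (hP : IsSYT μ n P) (k : ℕ) :
    {f : Cell μ → ℕ // IsRPP μ f ∧ vol μ f = k} ≃
      Σ Q : {Q : Cell μ ≃ Fin n // IsSYT μ n Q},
        {g : Fin n → ℕ // Monotone g ∧ ∑ i, g i + vol μ (ped P Q) = k} where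
  toFun f := ⟨⟨valueOrder P f, isSYT_valueOrder hP f.2.1⟩, partitionPart P f,
    monotone_partitionPart P f, by
      rw [vol_eq_sum, ← sum_pedFilling, pedFilling_partitionPart, ← vol_eq_sum, f.2.2]⟩
  invFun x := ⟨pedFilling P x.1 x.2, isRPP_pedFilling x.1.2 x.2.2.1, by
    rw [vol_eq_sum, sum_pedFilling, ← vol_eq_sum, x.2.2.2]⟩
  left_inv f := Subtype.ext (pedFilling_partitionPart P f)
  right_inv x := Sigma.subtype_ext (Subtype.ext (valueOrder_pedFilling _ x.2.2.1))
    (partitionPart_pedFilling _ x.2.2.1)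

open Classical in
theorem card_rpp_eq_sum (hP : IsSYT μ n P) (k : ℕ) :
    Nat.card {f : Cell μ → ℕ // IsRPP μ f ∧ vol μ f = k} =
      ∑ Q ∈ univ.filter (fun Q : Cell μ ≃ Fin n => IsSYT μ n Q),
        Nat.card {g : Fin n → ℕ // Monotone g ∧ ∑ i, g i + vol μ (ped P Q) = k} := by
  rw [Nat.card_congr (rppEquiv hP k), Nat.card_sigma]
  exact (sum_subtype _ (by simp) fun Q =>
    Nat.card {g : Fin n → ℕ // Monotone g ∧ ∑ i, g i + vol μ (ped P Q) = k}).symm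

end ReversePlanePartition

open Classical in
theorem coe_piP (μ : YoungDiagram) (n : ℕ) (P : Cell μ ≃ Fin n) :
    (piP μ n P : PowerSeries ℤ) =
      ∑ Q ∈ univ.filter (fun Q : Cell μ ≃ Fin n => IsSYT μ n Q),
        PowerSeries.X ^ vol μ (ped P Q) := by
  rw [piP, ← Polynomial.coeToPowerSeries.ringHom_apply, map_sum]
  simp [Polynomial.coeToPowerSeries.ringHom_apply]

theorem stmt10_general (μ : YoungDiagram) (n : ℕ) (P : Cell μ ≃ Fin n) (hP : IsSYT μ n P) :
    (PowerSeries.mk fun k => ((Set.ncard {f : Cell μ → ℕ | IsRPP μ f ∧ vol μ f = k} : ℕ) : ℤ)) *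
      ∏ k ∈ Finset.range n, (1 - PowerSeries.X ^ (k + 1)) =
      (piP μ n P : PowerSeries ℤ) := by
  have hseries : (PowerSeries.mk fun k =>
      ((Set.ncard {f : Cell μ → ℕ | IsRPP μ f ∧ vol μ f = k} : ℕ) : ℤ)) =
      piP μ n P * monotoneSeries n := by
    ext k
    rw [PowerSeries.coeff_mk, ← Nat.card_coe_set_eq, Set.coe_ofPred, card_rpp_eq_sum hP, coe_piP,
      sum_mul, map_sum, Nat.cast_sum]
    simp only [coeff_X_pow_mul_monotoneSeries]
  rw [hseries, mul_assoc, monotoneSeries_mul_prod, mul_one]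

/-- `Σ_k r_λ(k) x^k = π_λ(x) / ((1−x)(1−x²)⋯(1−xⁿ))` as formal
power series, stated multiplied out: the generating series of reverse plane
partitions of shape `λ` by volume times `(1−x)⋯(1−xⁿ)` equals `π_λ(x)`. -/
theorem stmt10 (μ : YoungDiagram) (n : ℕ) (hn : μ.card = n)
    (P : Cell μ ≃ Fin n) (hP : IsSYT μ n P) :
    (PowerSeries.mk fun k => ((Set.ncard {f : Cell μ → ℕ | IsRPP μ f ∧ vol μ f = k} : ℕ) : ℤ)) *
      ∏ k ∈ Finset.range n, (1 - PowerSeries.X ^ (k + 1)) =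
      (piP μ n P : PowerSeries ℤ) :=
  stmt10_general μ n P hP
end

section
/- For any finite poset S with n elements and any linear extension P of S, the multivariate pedestal polynomial 𝔥_P(x) = Σ_{Q linear extension of S} Π_{s∈S} x_{q_{P,Q}(s)} does not depend on the choice of the linear extension P. -/
/-- `T` is a linear extension of the poset `S` (with `n` elements), encoded as
a bijection `S ≃ Fin n` compatible with the partial order of `S`. -/
def IsLinExt {S : Type} [PartialOrder S] (n : ℕ) (T : S ≃ Fin n) : Prop :=
  ∀ a b : S, a ≤ b → T a ≤ T b

open Classical in
/-- The multivariate pedestal polynomial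
`𝔥_P = Σ_{Q linear extension of S} Π_{s∈S} x_{q_{P,Q}(s)}`. -/
noncomputable def hpS {S : Type} [PartialOrder S] [Fintype S] [DecidableEq S]
    (n : ℕ) (P : S ≃ Fin n) : MvPolynomial ℕ ℤ :=
  ∑ Q ∈ Finset.univ.filter (fun Q : S ≃ Fin n => IsLinExt n Q),
    ∏ s : S, MvPolynomial.X (ped P Q s)

theorem swap_lt_swap_iff_of_covBy {α : Type*} [LinearOrder α] {j j' u v : α} (hj : j ⋖ j')
    (huv : ¬(u = j ∧ v = j')) (hvu : ¬(v = j ∧ u = j')) :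
    Equiv.swap j j' u < Equiv.swap j j' v ↔ u < v := by
  have below : ∀ w, w ≠ j → (w < j' ↔ w < j) := fun w hw =>
    ⟨fun h => (hj.le_of_lt h).lt_of_ne hw, fun h => h.trans hj.lt⟩
  have above : ∀ w, w ≠ j' → (j < w ↔ j' < w) := fun w hw =>
    ⟨fun h => (hj.ge_of_gt h).lt_of_ne' hw, fun h => hj.lt.trans h⟩
  have hjj' := hj.lt
  rw [Equiv.swap_apply_def, Equiv.swap_apply_def]
  split_ifs <;> subst_vars <;> simp_all [hjj'.ne, hjj'.ne']

section

variable {S : Type} {n : ℕ}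

theorem IsLinExt.trans_swap [PartialOrder S] {P : S ≃ Fin n} (hP : IsLinExt n P) {a b : S}
    (hab : P a ⋖ P b) (hnab : ¬ a ≤ b) :
    IsLinExt n (P.trans (Equiv.swap (P a) (P b))) := by
  intro x y hxy
  rcases eq_or_ne x y with rfl | hne
  · exact le_rfl
  have hlt : P x < P y := (hP x y hxy).lt_of_ne (P.injective.ne hne)
  refine ((swap_lt_swap_iff_of_covBy hab ?_ ?_).2 hlt).le
  · rintro ⟨hxa, hyb⟩
    exact hnab (P.injective hxa ▸ P.injective hyb ▸ hxy)
  · rintro ⟨hya, hxb⟩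
    rw [hya, hxb] at hlt
    exact hlt.not_gt hab.lt

theorem prod_X_ped_congr {R : Type*} [CommSemiring R] [Fintype S] {P₁ Q₁ P₂ Q₂ : S ≃ Fin n}
    (h : disag P₁ Q₁ = disag P₂ Q₂) :
    ∏ s, (MvPolynomial.X (ped P₁ Q₁ s) : MvPolynomial ℕ R) =
      ∏ s, (MvPolynomial.X (ped P₂ Q₂ s) : MvPolynomial ℕ R) := by
  rw [← Q₁.symm.prod_comp, ← Q₂.symm.prod_comp]
  simp only [ped, Equiv.apply_symm_apply]
  rw [h]

theorem disag_congr {P₁ Q₁ P₂ Q₂ : S ≃ Fin n} (h : ∀ k, P₁ (Q₁.symm k) = P₂ (Q₂.symm k)) :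
    disag P₁ Q₁ = disag P₂ Q₂ := by
  funext l
  simp only [disag, h]

theorem disag_trans_swap {P Q : S ≃ Fin n} {a b : S} (hab : P a ⋖ P b)
    (hQ : ¬(Q a ⋖ Q b ∨ Q b ⋖ Q a)) :
    disag (P.trans (Equiv.swap (P a) (P b))) Q = disag P Q := by
  funext l
  refine propext (exists_congr fun hl => swap_lt_swap_iff_of_covBy hab ?_ ?_) <;>
  · rintro ⟨hx, hy⟩
    rw [P.injective.eq_iff, Q.symm_apply_eq] at hx hy
    refine hQ ?_
    simp [← hx, ← hy, Fin.covBy_iff]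

open Classical in
noncomputable def swapIfAdjacent (a b : S) (Q : S ≃ Fin n) : S ≃ Fin n :=
  if Q a ⋖ Q b ∨ Q b ⋖ Q a then Q.trans (Equiv.swap (Q a) (Q b)) else Q

theorem swapIfAdjacent_involutive (a b : S) :
    Function.Involutive (swapIfAdjacent (n := n) a b) := by
  intro Q
  by_cases hQ : Q a ⋖ Q b ∨ Q b ⋖ Q a
  · have hQ' : Q.trans (Equiv.swap (Q a) (Q b)) a = Q b ∧
        Q.trans (Equiv.swap (Q a) (Q b)) b = Q a := by simp
    have e : swapIfAdjacent a b Q = Q.trans (Equiv.swap (Q a) (Q b)) := if_pos hQ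
    rw [e, swapIfAdjacent, hQ'.1, hQ'.2, if_pos hQ.symm]
    ext x
    simp [Equiv.swap_comm]
  · have e : swapIfAdjacent a b Q = Q := if_neg hQ
    rw [e, e]

theorem IsLinExt.swapIfAdjacent [PartialOrder S] {Q : S ≃ Fin n}
    (hQ : IsLinExt n Q) {a b : S} (hnab : ¬ a ≤ b) (hnba : ¬ b ≤ a) :
    IsLinExt n (swapIfAdjacent a b Q) := by
  unfold _root_.swapIfAdjacent
  split_ifs with hadj
  · rcases hadj with hab | hba
    · exact hQ.trans_swap hab hnab
    · rw [Equiv.swap_comm]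
      exact hQ.trans_swap hba hnba
  · exact hQ

theorem disag_swapIfAdjacent {P : S ≃ Fin n} {a b : S} (hab : P a ⋖ P b)
    (Q : S ≃ Fin n) :
    disag (P.trans (Equiv.swap (P a) (P b))) (swapIfAdjacent a b Q) = disag P Q := by
  unfold swapIfAdjacent
  split_ifs with hQ
  · classical
    refine disag_congr fun k => ?_
    simp only [Equiv.trans_apply, Equiv.symm_trans_apply, Equiv.symm_swap]
    rw [Q.symm.injective.map_swap, Q.symm_apply_apply, Q.symm_apply_apply,
      P.injective.swap_apply, Equiv.swap_apply_self]
  · exact disag_trans_swap hab hQ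

theorem hpS_eq_hpS_trans_swap [PartialOrder S] [Fintype S] [DecidableEq S] (P : S ≃ Fin n)
    {a b : S} (hab : P a ⋖ P b) (hnab : ¬ a ≤ b) (hnba : ¬ b ≤ a) :
    hpS n P = hpS n (P.trans (Equiv.swap (P a) (P b))) := by
  have hinv := swapIfAdjacent_involutive (n := n) a b
  refine Finset.sum_nbij' _ _ ?_ ?_ (fun Q _ => hinv Q) (fun Q _ => hinv Q)
    fun Q _ => prod_X_ped_congr (disag_swapIfAdjacent hab Q).symm
  all_goals
    simp only [Finset.mem_filter, Finset.mem_univ, true_and]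
    exact fun Q hQ => hQ.swapIfAdjacent hnab hnba

def inversions [Fintype S] (P P' : S ≃ Fin n) : Finset (S × S) :=
  Finset.univ.filter fun p => P p.1 < P p.2 ∧ P' p.2 < P' p.1

theorem card_inversions_trans_swap_lt [Fintype S] {P P' : S ≃ Fin n} {a b : S}
    (hab : P a ⋖ P b) (hba : P' b < P' a) :
    (inversions (P.trans (Equiv.swap (P a) (P b))) P').card < (inversions P P').card := by
  refine Finset.card_lt_card ((Finset.ssubset_iff_of_subset ?_).2 ⟨(a, b), ?_, ?_⟩)
  · intro p hp
    simp only [inversions, Finset.mem_filter, Finset.mem_univ, true_and] at hp ⊢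
    rw [Equiv.trans_apply, Equiv.trans_apply] at hp
    refine ⟨?_, hp.2⟩
    by_cases hpab : P p.1 = P a ∧ P p.2 = P b
    · rw [hpab.1, hpab.2]
      exact hab.lt
    by_cases hpba : P p.2 = P a ∧ P p.1 = P b
    · rw [P.injective hpba.1, P.injective hpba.2] at hp
      exact absurd hp.2 hba.not_gt
    exact (swap_lt_swap_iff_of_covBy hab hpab hpba).1 hp.1
  · simp [inversions, hab.lt, hba]
  · rw [inversions, Finset.mem_filter]
    simp [hab.lt.not_gt]

theorem exists_covBy_of_ne {P P' : S ≃ Fin n} (h : P ≠ P') :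
    ∃ a b, P a ⋖ P b ∧ P' b < P' a := by
  by_contra! hmono
  have hτ : StrictMono (P.symm.trans P') := by
    refine (strictMono_iff_forall_covBy _).2 fun i k hik => ?_
    have := hmono (P.symm i) (P.symm k) (by simpa using hik)
    exact this.lt_of_ne (by simpa using hik.ne)
  have hid : ⇑(P.symm.trans P') = id :=
    (hτ.range_inj strictMono_id).1 (by simp)
  exact h (Equiv.ext fun s => by simpa using (congrFun hid (P s)).symm)

theorem eq_of_isLinExt_of_forall_trans_swap [PartialOrder S] [Fintype S]
    {β : Sort*} (f : (S ≃ Fin n) → β)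
    (hf : ∀ P a b, IsLinExt n P → P a ⋖ P b → ¬ a ≤ b → ¬ b ≤ a →
      f P = f (P.trans (Equiv.swap (P a) (P b))))
    {P P' : S ≃ Fin n} (hP : IsLinExt n P) (hP' : IsLinExt n P') : f P = f P' := by
  by_cases hPP' : P = P'
  · rw [hPP']
  obtain ⟨a, b, hab, hba⟩ := exists_covBy_of_ne hPP'
  have hnab : ¬ a ≤ b := fun h => (hP' a b h).not_gt hba
  have hnba : ¬ b ≤ a := fun h => (hP b a h).not_gt hab.lt
  rw [hf P a b hP hab hnab hnba]
  exact eq_of_isLinExt_of_forall_trans_swap f hf (hP.trans_swap hab hnab) hP'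
termination_by (inversions P P').card
decreasing_by exact card_inversions_trans_swap_lt hab hba

end

theorem stmt17_general {S : Type} [PartialOrder S] [Fintype S] [DecidableEq S] (n : ℕ)
    (P P' : S ≃ Fin n)
    (hP : IsLinExt n P) (hP' : IsLinExt n P') :
    hpS n P = hpS n P' :=
  eq_of_isLinExt_of_forall_trans_swap (hpS n)
    (fun P _ _ _ hab hnab hnba => hpS_eq_hpS_trans_swap P hab hnab hnba) hP hP'

/-- the multivariate pedestal polynomial of a finite poset does
not depend on the choice of the linear extension `P`. -/
theorem stmt17 {S : Type} [PartialOrder S] [Fintype S] [DecidableEq S] (n : ℕ)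
    (hn : Fintype.card S = n) (P P' : S ≃ Fin n)
    (hP : IsLinExt n P) (hP' : IsLinExt n P') :
    hpS n P = hpS n P' :=
  stmt17_general n P P' hP hP'
end
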